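/- arXiv:2203.09177 — 3 statements merged into one kernel-verified Lean document; each statement's English description precedes it below -/
import Mathlib

section
/- Let θ : (0,∞) → (0,∞) be twice continuously differentiable with θ(x) > 0 for all x, let μ > 0, and suppose there is a constant α such that for all x > 0: (i) θ'(x)·x = α·θ(x), and (ii) (θ'(x)/θ(x))·x·μ + (1/2)·θ''(x)·x²·θ(x) = α·μ. Then α ∈ {0, 1} and there exists C > 0 such that θ(x) = C·x^α for all x > 0. -/
lemma const_on_Ioi {f : ℝ → ℝ} (hf : ∀ x ∈ Set.Ioi (0:ℝ), HasDerivAt f 0 x)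
    {x y : ℝ} (hx : x ∈ Set.Ioi (0:ℝ)) (hy : y ∈ Set.Ioi (0:ℝ)) : f x = f y := by
  refine (convex_Ioi 0).is_const_of_fderivWithin_eq_zero
    (fun z hz => ((hf z hz).differentiableAt).differentiableWithinAt) (fun z hz => ?_) hx hy
  rw [fderivWithin_eq_fderiv (isOpen_Ioi.uniqueDiffOn z hz) (hf z hz).differentiableAt,
    (hf z hz).hasFDerivAt.fderiv]
  ext; simp

/-- Constant Volatility Elasticity theorem: if θ > 0 is twice continuously
    differentiable on (0,∞) and satisfies the diffusion-matching and
    drift-matching equations with constant elasticity α, then α ∈ {0,1}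
    and θ(x) = C·x^α for some C > 0. -/
theorem cve_theorem (θ θ' θ'' : ℝ → ℝ) (μ α : ℝ) (hμ : 0 < μ)
    (hθpos : ∀ x > (0:ℝ), 0 < θ x)
    (hθ' : ∀ x > (0:ℝ), HasDerivAt θ (θ' x) x)
    (hθ'' : ∀ x > (0:ℝ), HasDerivAt θ' (θ'' x) x)
    (hθ''cont : ContinuousOn θ'' (Set.Ioi 0))
    (hdiff : ∀ x > (0:ℝ), θ' x * x = α * θ x)
    (hdrift : ∀ x > (0:ℝ),
      (θ' x / θ x) * x * μ + (1/2) * θ'' x * x ^ 2 * θ x = α * μ) :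
    (α = 0 ∨ α = 1) ∧ ∃ C > (0:ℝ), ∀ x > (0:ℝ), θ x = C * x ^ α := by
  -- Step 1: θ'' = 0 on Ioi 0
  have h2 : ∀ x > (0:ℝ), θ'' x = 0 := by
    intro x hx
    have hθx := hθpos x hx
    have h1 : θ' x / θ x * x = α := by
      field_simp
      linarith [hdiff x hx]
    have := hdrift x hx
    rw [h1] at this
    have hz : (1/2) * θ'' x * x ^ 2 * θ x = 0 := by linarith
    have hz2 : θ'' x * (x ^ 2 * θ x) = 0 := by linarith
    exact (mul_eq_zero.1 hz2).resolve_right (by positivity)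
  -- Step 2: (α - 1) * θ' x = 0
  have h3 : ∀ x > (0:ℝ), (α - 1) * θ' x = 0 := by
    intro x hx
    -- differentiate θ' x * x = α * θ x
    have hL : HasDerivAt (fun y => θ' y * y) (θ'' x * x + θ' x) x := by
      exact ((hθ'' x hx).mul (hasDerivAt_id' x)).congr_deriv (by ring)
    have hR : HasDerivAt (fun y => α * θ y) (α * θ' x) x := (hθ' x hx).const_mul α
    have heq : (fun y => θ' y * y) =ᶠ[nhds x] (fun y => α * θ y) := by
      filter_upwards [isOpen_Ioi.mem_nhds hx] with y hy using hdiff y hy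
    have := (hL.congr_of_eventuallyEq heq.symm).unique hR
    rw [h2 x hx] at this
    linarith [this]
  have hα : α = 0 ∨ α = 1 := by
    by_cases h1 : α = 1
    · right; exact h1
    · left
      have hne : α - 1 ≠ 0 := fun h => h1 (by linarith)
      have hz : ∀ x > (0:ℝ), θ' x = 0 := fun x hx => by
        have := h3 x hx; exact (mul_eq_zero.1 this).resolve_left hne
      have := hdiff 1 one_pos
      rw [hz 1 one_pos] at this
      have hθ1 := hθpos 1 one_pos
      nlinarith
  refine ⟨hα, θ 1, hθpos 1 one_pos, ?_⟩
  intro x hx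
  rcases hα with h0 | h1
  · -- α = 0: θ constant
    subst h0
    have hz : ∀ y ∈ Set.Ioi (0:ℝ), HasDerivAt θ 0 y := by
      intro y hy
      have : θ' y = 0 := by
        have := hdiff y hy
        have : θ' y * y = 0 := by simpa using this
        rcases mul_eq_zero.1 this with h | h
        · exact h
        · exact absurd h (ne_of_gt hy)
      simpa [this] using hθ' y hy
    rw [Real.rpow_zero, mul_one]
    exact const_on_Ioi hz (Set.mem_Ioi.2 hx) (Set.mem_Ioi.2 one_pos)
  · subst h1
    have hg : ∀ y ∈ Set.Ioi (0:ℝ), HasDerivAt (fun y => θ y / y) 0 y := by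
      intro y hy
      have hy0 : (y:ℝ) ≠ 0 := ne_of_gt hy
      have := (hθ' y hy).div (hasDerivAt_id' y) hy0
      have hval : (θ' y * y - θ y) / y ^ 2 = 0 := by
        have := hdiff y hy
        rw [one_mul] at this
        rw [this]; ring
      exact this.congr_deriv (by rw [mul_one, hval])
    have := const_on_Ioi hg (Set.mem_Ioi.2 hx) (Set.mem_Ioi.2 one_pos)
    rw [Real.rpow_one]
    have hx0 : (x:ℝ) ≠ 0 := ne_of_gt hx
    field_simp at this
    linarith [this]
end

section
/- Let α : (0,∞) → ℝ be differentiable and satisfy α(x)² + α'(x)·x − α(x) = 0 for all x > 0. If α is not identically 0 and not identically 1, and α(x₀) = C·x₀/(1 + C·x₀) for some x₀ > 0 and some constant C with 1 + C·x > 0 on (0,∞), then α(x) = C·x/(1 + C·x) for all x > 0. -/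
/-- Nontrivial solutions of the elasticity ODE α² + xα' − α = 0 with the
    given initial value form the family α(x) = Cx/(1+Cx). -/
theorem vve_elasticity_ode_solution (α α' : ℝ → ℝ) (C : ℝ)
    (hderiv : ∀ x > (0:ℝ), HasDerivAt α (α' x) x)
    (hode : ∀ x > (0:ℝ), (α x) ^ 2 + α' x * x - α x = 0)
    (hnot0 : ¬ ∀ x > (0:ℝ), α x = 0)
    (hnot1 : ¬ ∀ x > (0:ℝ), α x = 1)
    (hCdom : ∀ x > (0:ℝ), 0 < 1 + C * x)
    (x₀ : ℝ) (hx₀ : 0 < x₀) (hinit : α x₀ = C * x₀ / (1 + C * x₀)) :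
    ∀ x > (0:ℝ), α x = C * x / (1 + C * x) := by
  have hcontα : ContinuousOn α (Set.Ioi 0) := fun x hx =>
    (hderiv x hx).continuousAt.continuousWithinAt
  set f : ℝ → ℝ := fun t => α t / t with hfdef
  have hcontf : ContinuousOn f (Set.Ioi 0) := by
    apply hcontα.div continuousOn_id
    intro x hx; exact ne_of_gt hx
  set Q : ℝ → ℝ := fun x => ∫ t in x₀..x, f t with hQdef
  have hQ : ∀ x ∈ Set.Ioi (0:ℝ), HasDerivAt Q (f x) x := by
    intro x hx
    apply intervalIntegral.integral_hasDerivAt_right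
    · apply ContinuousOn.intervalIntegrable
      apply hcontf.mono
      intro t ht
      exact lt_of_lt_of_le (lt_min hx₀ hx) ht.1
    · exact hcontf.stronglyMeasurableAtFilter isOpen_Ioi x hx
    · exact (hcontf x hx).continuousAt (Ioi_mem_nhds hx)
  -- ψ and its derivative
  set ψ : ℝ → ℝ := fun x => α x * (x⁻¹ + C) - C with hψdef
  set F : ℝ → ℝ := fun x => ψ x * Real.exp (Q x) with hFdef
  have hF : ∀ x ∈ Set.Ioi (0:ℝ), HasDerivAt F 0 x := by
    intro x hx
    have hxne : x ≠ 0 := ne_of_gt hx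
    have hψ' : HasDerivAt ψ (α' x * (x⁻¹ + C) + α x * (-(x^2)⁻¹)) x := by
      exact (((hderiv x hx).mul ((hasDerivAt_inv hxne).add_const C)).sub_const C)
    have hE : HasDerivAt (fun y => Real.exp (Q y)) (Real.exp (Q x) * f x) x :=
      (Real.hasDerivAt_exp (Q x)).comp x (hQ x hx) |>.congr_deriv (by ring)
    have := hψ'.mul hE
    convert this using 1
    iterate 3 rfl
    have hα' : α' x = (α x - (α x)^2) / x := by
      have h := hode x hx
      field_simp
      linarith
    simp only [hfdef, hα']
    rw [show (x^2)⁻¹ = x⁻¹ * x⁻¹ by rw [sq, mul_inv], show x⁻¹ = 1/x from (one_div x).symm]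
    field_simp
    linear_combination (-(α x ^ 2 * Real.exp (Q x))) * (mul_inv_cancel₀ hxne)
  have hconst : ∀ a b : ℝ, 0 < a → a ≤ b → F b = F a := by
    intro a b ha hab
    have hsub : Set.Icc a b ⊆ Set.Ioi (0:ℝ) := fun t ht => lt_of_lt_of_le ha ht.1
    have hcont : ContinuousOn F (Set.Icc a b) := fun t ht =>
      ((hF t (hsub ht)).continuousAt).continuousWithinAt
    exact constant_of_has_deriv_right_zero hcont
      (fun t ht => (hF t (hsub ⟨ht.1, le_of_lt ht.2⟩)).hasDerivWithinAt)
      b (Set.right_mem_Icc.mpr hab)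
  have hx₀ne : x₀ ≠ 0 := ne_of_gt hx₀
  have hC₀ : (1 + C * x₀) ≠ 0 := ne_of_gt (hCdom x₀ hx₀)
  have hψ₀ : ψ x₀ = 0 := by
    simp only [hψdef]
    rw [hinit]
    field_simp
    ring
  have hF₀ : F x₀ = 0 := by simp [hFdef, hψ₀]
  intro x hx
  have hxne : x ≠ 0 := ne_of_gt hx
  have hFx : F x = 0 := by
    rcases le_total x x₀ with h | h
    · rw [hconst x x₀ hx h] at hF₀; exact hF₀
    · rw [hconst x₀ x hx₀ h, hF₀]
  have hψx : ψ x = 0 := by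
    have hexp : Real.exp (Q x) ≠ 0 := Real.exp_ne_zero _
    have := hFx
    simp only [hFdef, mul_eq_zero] at this
    tauto
  have hCx : (1 + C * x) ≠ 0 := ne_of_gt (hCdom x hx)
  simp only [hψdef, sub_eq_zero] at hψx
  field_simp
  field_simp [hxne] at hψx
  linarith
end

section
/- Let r, σ > 0 with r ≠ σ²/2, set δ = r/(r − σ²/2), and let C₁, S₀ > 0. For t ≥ 0 define f_t(y) = σY₀e^{(r−σ²/2)t + σy} / ((δ−1)C₁Y₀e^{(r−σ²/2)t + σy} − δC₁Y₀e^{σy} + 1) where Y₀ = S₀/(σ + C₁S₀), on the domain of y where the denominator is positive and f_t(y) > 0. Then f_t is strictly monotone in y on this domain, hence injective. -/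
/-!
Splitting `exp ((r - σ²/2) t + σ y) = A · exp (σ y)`, the map `f_t` is the Möbius map
`z ↦ K z / (c z + 1)` with `K = σ Y₀ A > 0`, evaluated at the increasing `z = exp (σ y)`.
That Möbius map has determinant `K > 0`, so it is increasing wherever its denominator is positive.
-/

open Real

theorem strictMonoOn_mul_div_mul_add_one {K : ℝ} (hK : 0 < K) (c : ℝ) :
    StrictMonoOn (fun z => K * z / (c * z + 1)) {z | 0 < c * z + 1} := by
  intro z₁ h₁ z₂ h₂ hlt
  simp only [Set.mem_ofPred_eq] at h₁ h₂
  rw [div_lt_div_iff₀ h₁ h₂]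
  -- after cross-multiplying, the `K c z₁ z₂` terms cancel
  nlinarith

theorem strictMonoOn_mul_exp_div_mul_exp_add_one {K σ : ℝ} (hK : 0 < K) (hσ : 0 < σ) (c : ℝ)
    {D : Set ℝ} (hD : ∀ y ∈ D, 0 < c * exp (σ * y) + 1) :
    StrictMonoOn (fun y => K * exp (σ * y) / (c * exp (σ * y) + 1)) D := by
  have hexp : StrictMono fun y => exp (σ * y) :=
    exp_strictMono.comp (strictMono_mul_left_of_pos hσ)
  exact (strictMonoOn_mul_div_mul_add_one hK c).comp (hexp.strictMonoOn D) hD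

theorem vve_ft_injective_general (r σ C₁ S₀ : ℝ) (hσ : 0 < σ)
    (hC₁ : 0 < C₁) (hS₀ : 0 < S₀)
    (δ Y₀ : ℝ) (hY₀ : Y₀ = S₀ / (σ + C₁ * S₀))
    (t : ℝ)
    (f : ℝ → ℝ)
    (hf : ∀ y, f y = σ * Y₀ * Real.exp ((r - σ ^ 2 / 2) * t + σ * y)
      / ((δ - 1) * C₁ * Y₀ * Real.exp ((r - σ ^ 2 / 2) * t + σ * y)
          - δ * C₁ * Y₀ * Real.exp (σ * y) + 1))
    (D : Set ℝ)
    (hD : D = {y : ℝ | 0 < (δ - 1) * C₁ * Y₀ * Real.exp ((r - σ ^ 2 / 2) * t + σ * y)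
          - δ * C₁ * Y₀ * Real.exp (σ * y) + 1 ∧ 0 < f y}) :
    (StrictMonoOn f D ∨ StrictAntiOn f D) ∧ Set.InjOn f D := by
  set A := exp ((r - σ ^ 2 / 2) * t)
  set c := (δ - 1) * C₁ * Y₀ * A - δ * C₁ * Y₀
  have hK : 0 < σ * Y₀ * A := by rw [hY₀]; positivity
  have hden : ∀ y, (δ - 1) * C₁ * Y₀ * exp ((r - σ ^ 2 / 2) * t + σ * y)
      - δ * C₁ * Y₀ * exp (σ * y) + 1 = c * exp (σ * y) + 1 := fun y => by
    rw [exp_add]; ring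
  have hf' : f = fun y => σ * Y₀ * A * exp (σ * y) / (c * exp (σ * y) + 1) := funext fun y => by
    rw [hf, hden, exp_add, ← mul_assoc]
  have hmono : StrictMonoOn f D := hf' ▸
    strictMonoOn_mul_exp_div_mul_exp_add_one hK hσ c fun y hy => hden y ▸ (hD ▸ hy).1
  exact ⟨Or.inl hmono, hmono.injOn⟩

/-- The risk-neutral price map f_t(y) of the VVE model is strictly monotone
    in the Brownian variable y on its positivity domain, hence injective. -/
theorem vve_ft_injective (r σ C₁ S₀ : ℝ) (hr : 0 < r) (hσ : 0 < σ)
    (hC₁ : 0 < C₁) (hS₀ : 0 < S₀) (hrσ : r ≠ σ ^ 2 / 2)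
    (δ Y₀ : ℝ) (hδ : δ = r / (r - σ ^ 2 / 2)) (hY₀ : Y₀ = S₀ / (σ + C₁ * S₀))
    (t : ℝ) (ht : 0 ≤ t)
    (f : ℝ → ℝ)
    (hf : ∀ y, f y = σ * Y₀ * Real.exp ((r - σ ^ 2 / 2) * t + σ * y)
      / ((δ - 1) * C₁ * Y₀ * Real.exp ((r - σ ^ 2 / 2) * t + σ * y)
          - δ * C₁ * Y₀ * Real.exp (σ * y) + 1))
    (D : Set ℝ)
    (hD : D = {y : ℝ | 0 < (δ - 1) * C₁ * Y₀ * Real.exp ((r - σ ^ 2 / 2) * t + σ * y)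
          - δ * C₁ * Y₀ * Real.exp (σ * y) + 1 ∧ 0 < f y}) :
    (StrictMonoOn f D ∨ StrictAntiOn f D) ∧ Set.InjOn f D :=
  vve_ft_injective_general r σ C₁ S₀ hσ hC₁ hS₀ δ Y₀ hY₀ t f hf D hD
end
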